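/- Let F_q be a finite field and M an M_1-matrix over F_q. Then PR(M) ≤ (2q/(q−1)) · E_{x ∈ F_q^n}[rank M(x)], where the expectation is over a uniformly random x ∈ F_q^n. -/

import Mathlib

open MvPolynomial

section Defs

variable {F : Type*} [Field F]

/-- A polynomial in the block variables `x_{i,j}` (`i ∈ Fin d`, `j ∈ Fin n`) is
multilinear exactly in the blocks of `S`: every monomial has degree 1 in each block
`i ∈ S` and degree 0 in each block `i ∉ S`. -/
def IsMultilinearOn {d n : ℕ} (S : Finset (Fin d))
    (f : MvPolynomial (Fin d × Fin n) F) : Prop :=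
  ∀ m ∈ f.support, ∀ i : Fin d,
    (∑ j : Fin n, m (i, j)) = if i ∈ S then 1 else 0

/-- A multilinear form: degree 1 in every block of variables. -/
def IsMultilinear {d n : ℕ} (f : MvPolynomial (Fin d × Fin n) F) : Prop :=
  IsMultilinearOn Finset.univ f

/-- Commutative rank: the rank of the matrix over the field of fractions of the
polynomial ring. -/
noncomputable def CR {σ : Type*} {α β : Type*} [Fintype β]
    (M : Matrix α β (MvPolynomial σ F)) : ℕ :=
  (M.map (algebraMap (MvPolynomial σ F) (FractionRing (MvPolynomial σ F)))).rank

/-- `M` is the sum of `r` outer products `u ⊗ v`, where `u` has entries multilinear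
in the blocks of some `S ⊆ [d]` and `v` has entries multilinear in the complementary
blocks. -/
def HasPRDecomp {d n a b : ℕ}
    (M : Matrix (Fin a) (Fin b) (MvPolynomial (Fin d × Fin n) F)) (r : ℕ) : Prop :=
  ∃ (S : Fin r → Finset (Fin d))
    (u : Fin r → Fin a → MvPolynomial (Fin d × Fin n) F)
    (v : Fin r → Fin b → MvPolynomial (Fin d × Fin n) F),
    (∀ t i, IsMultilinearOn (S t) (u t i)) ∧
    (∀ t j, IsMultilinearOn (S t)ᶜ (v t j)) ∧
    M = ∑ t, Matrix.of fun i j => u t i * v t j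

/-- Partition rank of a matrix of multilinear forms. -/
noncomputable def PR {d n a b : ℕ}
    (M : Matrix (Fin a) (Fin b) (MvPolynomial (Fin d × Fin n) F)) : ℕ :=
  sInf {r | HasPRDecomp M r}

/-- Evaluation of a matrix of multilinear forms at a point `p ∈ (F^n)^d`. -/
noncomputable def evalMat {d n : ℕ} {α β : Type*}
    (M : Matrix α β (MvPolynomial (Fin d × Fin n) F)) (p : Fin d → Fin n → F) :
    Matrix α β F :=
  M.map (eval fun v => p v.1 v.2)

/-- Max-rank: the largest rank of a scalar evaluation. -/
noncomputable def MaxR {d n : ℕ} {α β : Type*} [Fintype β]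
    (M : Matrix α β (MvPolynomial (Fin d × Fin n) F)) : ℕ :=
  ⨆ p : Fin d → Fin n → F, (evalMat M p).rank

/-- Partial evaluation: substitute `x_i := p_i` for `i ∈ S`, leaving the other
blocks of variables untouched. -/
noncomputable def pevalMat {d n : ℕ} {α β : Type*}
    (M : Matrix α β (MvPolynomial (Fin d × Fin n) F)) (S : Finset (Fin d))
    (p : Fin d → Fin n → F) :
    Matrix α β (MvPolynomial (Fin d × Fin n) F) :=
  M.map (aeval fun v : Fin d × Fin n => if v.1 ∈ S then C (p v.1 v.2) else X v)

end Defs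

section D1

variable {F : Type*} [Field F]

/-- Partition-rank decomposition for matrices of linear forms: a sum of `r` outer
products, each either (scalars) ⊗ (linear forms) or (linear forms) ⊗ (scalars). -/
def HasPR1Decomp {n a b : ℕ}
    (M : Matrix (Fin a) (Fin b) (MvPolynomial (Fin n) F)) (r : ℕ) : Prop :=
  ∃ (c : Fin r → Bool)
    (u : Fin r → Fin a → MvPolynomial (Fin n) F)
    (v : Fin r → Fin b → MvPolynomial (Fin n) F),
    (∀ t i, (u t i).IsHomogeneous (if c t then 0 else 1)) ∧
    (∀ t j, (v t j).IsHomogeneous (if c t then 1 else 0)) ∧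
    M = ∑ t, Matrix.of fun i j => u t i * v t j

/-- Partition rank of a matrix of linear forms. -/
noncomputable def PR1 {n a b : ℕ}
    (M : Matrix (Fin a) (Fin b) (MvPolynomial (Fin n) F)) : ℕ :=
  sInf {r | HasPR1Decomp M r}

/-- Max-rank of a matrix of linear forms. -/
noncomputable def MaxR1 {n a b : ℕ}
    (M : Matrix (Fin a) (Fin b) (MvPolynomial (Fin n) F)) : ℕ :=
  ⨆ p : Fin n → F, (M.map (eval p)).rank

end D1

section Tensor3

variable {F : Type*} [Field F]

/-- Substitute the first two blocks of variables of a trilinear form at `x` and `y`,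
leaving a polynomial in the third block. -/
noncomputable def sub01 {n : ℕ} (T : MvPolynomial (Fin 3 × Fin n) F)
    (x y : Fin n → F) : MvPolynomial (Fin 3 × Fin n) F :=
  aeval (fun v : Fin 3 × Fin n =>
    if v.1 = 0 then C (x v.2) else if v.1 = 1 then C (y v.2) else X v) T

open Classical in
/-- The bias of a 3-tensor: the probability over `(x, y)` that `T(x, y, -)` is the
zero linear form. -/
noncomputable def bias {n : ℕ} [Fintype F] (T : MvPolynomial (Fin 3 × Fin n) F) : ℝ :=
  ((Finset.univ.filter fun p : (Fin n → F) × (Fin n → F) =>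
      sub01 T p.1 p.2 = 0).card : ℝ) /
    ((Fintype.card ((Fin n → F) × (Fin n → F))) : ℝ)

/-- The analytic rank of a 3-tensor. -/
noncomputable def AR {n : ℕ} [Fintype F] (T : MvPolynomial (Fin 3 × Fin n) F) : ℝ :=
  - Real.logb (Fintype.card F) (bias T)

/-- A slice-rank decomposition: `T = ∑ f_t g_t` with `f_t` a linear form in one
block and `g_t` a bilinear form in the other two blocks. -/
def HasSRDecomp {n : ℕ} (T : MvPolynomial (Fin 3 × Fin n) F) (r : ℕ) : Prop :=
  ∃ (c : Fin r → Fin 3) (f g : Fin r → MvPolynomial (Fin 3 × Fin n) F),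
    (∀ t, IsMultilinearOn {c t} (f t)) ∧
    (∀ t, IsMultilinearOn ({c t} : Finset (Fin 3))ᶜ (g t)) ∧
    T = ∑ t, f t * g t

/-- Slice rank of a 3-tensor. -/
noncomputable def SR {n : ℕ} (T : MvPolynomial (Fin 3 × Fin n) F) : ℕ :=
  sInf {r | HasSRDecomp T r}

/-- The matrix `mat T` of a 3-tensor, evaluated at `x` in its first block:
the `(j,k)` entry is `T(x, e_j, e_k)`. -/
noncomputable def matT {n : ℕ} (T : MvPolynomial (Fin 3 × Fin n) F)
    (x : Fin n → F) : Matrix (Fin n) (Fin n) F :=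
  Matrix.of fun j k => eval (fun v : Fin 3 × Fin n =>
    if v.1 = 0 then x v.2
    else if v.1 = 1 then (if v.2 = j then 1 else 0)
    else (if v.2 = k then 1 else 0)) T

end Tensor3

section Mult

variable {F : Type*} [Field F]

/-- `mult(f, p)`: the minimum total degree of a monomial of `f(x + p)`. -/
noncomputable def polyMult {n : ℕ} (f : MvPolynomial (Fin n) F) (p : Fin n → F) : ℕ :=
  sInf {k | ∃ m ∈ (aeval (fun i : Fin n => X i + C (p i)) f :
    MvPolynomial (Fin n) F).support, (∑ i, m i) = k}

end Mult

/-!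
Pick a point `x₀` where `M(x₀)` has rank `R ≥ 1`. Constant row and column operations bring
`M(x₀)` to `[1 0; 0 0]`; peeling off the first `R` rows and the first `R` columns costs `2R` in
partition rank and leaves the lower right block `D`. For fixed `x`, the ranks of
`M(x + t x₀) = M(x) + t M(x₀)`, `t ∈ F_q`, fall short of `R + rank D(x)` by at most `R` in total:
the shortfall at `t` is at most the geometric multiplicity of the eigenvalue `t` of a Schur
complement. Averaging over `x` gives `q · E[rank D] + (q - 1) R ≤ q · E[rank M]`, and induction
on `∑ₓ rank M(x)` applied to `D` concludes.
-/

open MvPolynomial Matrix Module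

namespace MvPolynomial

variable {σ R : Type*} [CommRing R]

theorem IsHomogeneous.eval_add_smul {p : MvPolynomial σ R} (hp : p.IsHomogeneous 1)
    (x y : σ → R) (t : R) : eval (x + t • y) p = eval x p + t * eval y p := by
  have hspan : p ∈ Submodule.span R (Set.range X) := by
    rwa [← homogeneousSubmodule_one_eq_span_X]
  clear hp
  induction hspan using Submodule.span_induction with
  | mem _ h => obtain ⟨i, rfl⟩ := h; simp
  | zero => simp
  | add p q _ _ hp hq => simp only [map_add, hp, hq]; ring
  | smul c p _ hp => simp only [smul_eval, hp]; ring

theorem IsHomogeneous.eq_zero_of_forall_eval_eq_zero_of_degree_one [IsDomain R]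
    {p : MvPolynomial σ R} (hp : p.IsHomogeneous 1) (h : ∀ x, eval x p = 0) : p = 0 :=
  hp.eq_zero_of_forall_eval_eq_zero_of_le_card h (by simp [Cardinal.one_le_iff_ne_zero])

end MvPolynomial

theorem Polynomial.sum_rootMultiplicity_le_natDegree {R : Type*} [CommRing R] [IsDomain R]
    [Fintype R] (p : Polynomial R) : ∑ a, p.rootMultiplicity a ≤ p.natDegree := by
  classical
  simp_rw [← Polynomial.count_roots]
  rw [Multiset.sum_count_eq_card fun a _ => Finset.mem_univ a]
  exact p.card_roots'

theorem Module.End.sum_finrank_eigenspace_le {K V : Type*} [Field K] [Fintype K]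
    [AddCommGroup V] [Module K V] [FiniteDimensional K V] (f : Module.End K V) :
    ∑ μ, finrank K (f.eigenspace μ) ≤ finrank K V :=
  calc ∑ μ, finrank K (f.eigenspace μ) ≤ ∑ μ, f.charpoly.rootMultiplicity μ :=
        Finset.sum_le_sum fun μ _ => f.finrank_eigenspace_le μ
    _ ≤ f.charpoly.natDegree := Polynomial.sum_rootMultiplicity_le_natDegree _
    _ = finrank K V := f.charpoly_natDegree

namespace Matrix

theorem rank_pos_of_ne_zero {K m n : Type*} [Field K] [Fintype n] [DecidableEq n]
    {A : Matrix m n K} (hA : A ≠ 0) : 0 < A.rank := by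
  refine Nat.pos_of_ne_zero fun h => hA ?_
  rw [rank, Submodule.finrank_eq_zero, LinearMap.range_eq_bot, ← toLin'_apply'] at h
  simpa using h

variable {K l m : Type*} [Field K] [Fintype l] [Fintype m] [DecidableEq l] [DecidableEq m]

theorem finrank_ker_fromBlocks_one_le (A : Matrix l l K) (X : Matrix l m K) (Y : Matrix m l K)
    (t : K) :
    finrank K (LinearMap.ker (fromBlocks (A + t • 1) X Y 1).mulVecLin) ≤
      finrank K (Module.End.eigenspace (toLin' (X * Y - A)) t) := by
  set B := fromBlocks (A + t • 1) X Y 1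
  have hblocks : ∀ v ∈ LinearMap.ker B.mulVecLin, v ∘ Sum.inr = -(Y *ᵥ (v ∘ Sum.inl)) ∧
      (X * Y - A) *ᵥ (v ∘ Sum.inl) = t • (v ∘ Sum.inl) := by
    intro v hv
    rw [LinearMap.mem_ker, mulVecLin_apply, fromBlocks_mulVec] at hv
    have h₁ := congrArg (· ∘ Sum.inl) hv
    have h₂ := congrArg (· ∘ Sum.inr) hv
    simp only [Sum.elim_comp_inl, Sum.elim_comp_inr, one_mulVec, Pi.zero_comp] at h₁ h₂
    have hr : v ∘ Sum.inr = -(Y *ᵥ (v ∘ Sum.inl)) := eq_neg_of_add_eq_zero_right h₂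
    refine ⟨hr, ?_⟩
    rw [hr, add_mulVec, smul_mulVec, one_mulVec, mulVec_neg] at h₁
    rw [sub_mulVec, ← mulVec_mulVec]
    funext i
    have hi := congrFun h₁ i
    simp only [Pi.add_apply, Pi.neg_apply, Pi.zero_apply, Pi.smul_apply, Pi.sub_apply] at hi ⊢
    linear_combination -hi
  let φ : LinearMap.ker B.mulVecLin →ₗ[K] Module.End.eigenspace (toLin' (X * Y - A)) t :=
    ((LinearMap.funLeft K K Sum.inl).comp (LinearMap.ker _).subtype).codRestrict _ fun v =>
      Module.End.mem_eigenspace_iff.mpr (hblocks v v.2).2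
  refine LinearMap.finrank_le_finrank_of_injective (f := φ) fun v w hvw => ?_
  have h₁ : (v : l ⊕ m → K) ∘ Sum.inl = (w : l ⊕ m → K) ∘ Sum.inl := congrArg Subtype.val hvw
  have h₂ : (v : l ⊕ m → K) ∘ Sum.inr = (w : l ⊕ m → K) ∘ Sum.inr := by
    rw [(hblocks v v.2).1, (hblocks w w.2).1, h₁]
  ext (i | i)
  exacts [congrFun h₁ i, congrFun h₂ i]

theorem card_mul_le_sum_rank_fromBlocks_one [Fintype K] (A : Matrix l l K) (X : Matrix l m K)
    (Y : Matrix m l K) :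
    Fintype.card K * (Fintype.card l + Fintype.card m) ≤
      ∑ t : K, (fromBlocks (A + t • 1) X Y 1).rank + Fintype.card l := by
  have hnullity : ∀ t : K, (fromBlocks (A + t • 1) X Y 1).rank +
      finrank K (LinearMap.ker (fromBlocks (A + t • 1) X Y 1).mulVecLin) =
        Fintype.card l + Fintype.card m := fun t => by
    rw [rank, LinearMap.finrank_range_add_finrank_ker, finrank_fintype_fun_eq_card,
      Fintype.card_sum]
  have heig := Module.End.sum_finrank_eigenspace_le (toLin' (X * Y - A))
  rw [finrank_fintype_fun_eq_card] at heig
  calc Fintype.card K * (Fintype.card l + Fintype.card m)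
      = ∑ t : K, ((fromBlocks (A + t • 1) X Y 1).rank +
          finrank K (LinearMap.ker (fromBlocks (A + t • 1) X Y 1).mulVecLin)) := by
        simp [hnullity]
    _ ≤ ∑ t : K, ((fromBlocks (A + t • 1) X Y 1).rank +
          finrank K (Module.End.eigenspace (toLin' (X * Y - A)) t)) :=
        Finset.sum_le_sum fun t _ => Nat.add_le_add_left (finrank_ker_fromBlocks_one_le A X Y t) _
    _ ≤ ∑ t : K, (fromBlocks (A + t • 1) X Y 1).rank + Fintype.card l := by
        rw [Finset.sum_add_distrib]
        exact Nat.add_le_add_left heig _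

theorem card_mul_le_sum_rank_add_smul [Fintype K] (A : Matrix (l ⊕ m) (l ⊕ m) K) :
    Fintype.card K * (Fintype.card l + A.toBlocks₂₂.rank) ≤
      ∑ t : K, (A + t • fromBlocks 1 0 0 0).rank + Fintype.card l := by
  obtain ⟨V, U, e, hV, hU, hVU⟩ := exists_rank_normal_form A.toBlocks₂₂
  -- `g` picks the rows and columns on which `V * A.toBlocks₂₂ * U` is the identity
  set g : Fin A.toBlocks₂₂.rank → m := e.symm ∘ Sum.inl
  have hunit : ∀ W : Matrix m m K, IsUnit W → IsUnit (fromBlocks (1 : Matrix l l K) 0 0 W).det :=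
    fun W hW => by
      rw [det_fromBlocks_one₁₁, Matrix.zero_mul, sub_zero]
      exact (isUnit_iff_isUnit_det W).mp hW
  have hsub : ∀ t : K, fromBlocks (A.toBlocks₁₁ + t • 1) ((A.toBlocks₁₂ * U).submatrix id g)
      ((V * A.toBlocks₂₁).submatrix g id) 1 =
      (fromBlocks 1 0 0 V * (A + t • fromBlocks 1 0 0 0) * fromBlocks 1 0 0 U).submatrix
        (Sum.map id g) (Sum.map id g) := fun t => by
    have hD : (V * A.toBlocks₂₂ * U).submatrix g g = 1 := by
      rw [hVU]; ext i j; simp [g, one_apply]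
    have hA : A + t • fromBlocks 1 0 0 0 =
        fromBlocks (A.toBlocks₁₁ + t • 1) A.toBlocks₁₂ A.toBlocks₂₁ A.toBlocks₂₂ := by
      ext (i | i) (j | j) <;> simp [toBlocks₁₁, toBlocks₁₂, toBlocks₂₁, toBlocks₂₂]
    rw [hA, fromBlocks_multiply, fromBlocks_multiply, ← hD]
    ext (i | i) (j | j) <;> simp [Matrix.mul_assoc]
  have hle : ∀ t : K, (fromBlocks (A.toBlocks₁₁ + t • 1) ((A.toBlocks₁₂ * U).submatrix id g)
      ((V * A.toBlocks₂₁).submatrix g id) 1).rank ≤ (A + t • fromBlocks 1 0 0 0).rank :=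
    fun t => by
      rw [hsub]
      refine (rank_submatrix_le _ _ _).trans_eq ?_
      rw [rank_mul_eq_left_of_isUnit_det _ _ (hunit U hU),
        rank_mul_eq_right_of_isUnit_det _ _ (hunit V hV)]
  calc Fintype.card K * (Fintype.card l + A.toBlocks₂₂.rank)
      = Fintype.card K * (Fintype.card l + Fintype.card (Fin A.toBlocks₂₂.rank)) := by simp
    _ ≤ _ := card_mul_le_sum_rank_fromBlocks_one _ _ _
    _ ≤ _ := Nat.add_le_add_right (Finset.sum_le_sum fun t _ => hle t) _

end Matrix

section PR1

variable {R σ m p m' p' : Type*} [CommSemiring R]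

/-- `HasPR1Decomp` for arbitrary index types and coefficient rings; on `Fin`-indexed matrices
over a field the two agree definitionally. -/
def PR1Decomposable (M : Matrix m p (MvPolynomial σ R)) (r : ℕ) : Prop :=
  ∃ (c : Fin r → Bool) (u : Fin r → m → MvPolynomial σ R) (v : Fin r → p → MvPolynomial σ R),
    (∀ t i, (u t i).IsHomogeneous (if c t then 0 else 1)) ∧
    (∀ t j, (v t j).IsHomogeneous (if c t then 1 else 0)) ∧
    M = ∑ t, Matrix.of fun i j => u t i * v t j

namespace PR1Decomposable

theorem zero : PR1Decomposable (0 : Matrix m p (MvPolynomial σ R)) 0 :=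
  ⟨Fin.elim0, Fin.elim0, Fin.elim0, fun t => t.elim0, fun t => t.elim0, by simp⟩

theorem add {M N : Matrix m p (MvPolynomial σ R)} {r s : ℕ} (hM : PR1Decomposable M r)
    (hN : PR1Decomposable N s) : PR1Decomposable (M + N) (r + s) := by
  obtain ⟨c₁, u₁, v₁, hu₁, hv₁, rfl⟩ := hM
  obtain ⟨c₂, u₂, v₂, hu₂, hv₂, rfl⟩ := hN
  refine ⟨Fin.append c₁ c₂, Fin.append u₁ u₂, Fin.append v₁ v₂, ?_, ?_, ?_⟩
  · intro t i
    cases t using Fin.addCases <;> simp [hu₁, hu₂]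
  · intro t j
    cases t using Fin.addCases <;> simp [hv₁, hv₂]
  · simp [Fin.sum_univ_add]

theorem submatrix {M : Matrix m p (MvPolynomial σ R)} {r : ℕ} (h : PR1Decomposable M r)
    (f : m' → m) (g : p' → p) : PR1Decomposable (M.submatrix f g) r := by
  obtain ⟨c, u, v, hu, hv, rfl⟩ := h
  refine ⟨c, fun t => u t ∘ f, fun t => v t ∘ g, fun t i => hu t _, fun t j => hv t _, ?_⟩
  ext i j
  simp [Matrix.sum_apply]

theorem const_mul_mul_const [Fintype m] [Fintype p] {M : Matrix m p (MvPolynomial σ R)} {r : ℕ}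
    (h : PR1Decomposable M r) (S : Matrix m' m R) (T : Matrix p p' R) :
    PR1Decomposable
      (S.map (C : R →+* MvPolynomial σ R) * M * T.map (C : R →+* MvPolynomial σ R)) r := by
  obtain ⟨c, u, v, hu, hv, rfl⟩ := h
  refine ⟨c, fun t i => ∑ i', C (S i i') * u t i', fun t j => ∑ j', v t j' * C (T j' j),
    fun t i => IsHomogeneous.sum _ _ _ fun i' _ => (hu t i').C_mul (S i i'),
    fun t j => IsHomogeneous.sum _ _ _ fun j' _ => by
      simpa [mul_comm] using (hv t j').C_mul (T j' j), ?_⟩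
  rw [Matrix.mul_sum, Matrix.sum_mul]
  refine Finset.sum_congr rfl fun t _ => Matrix.ext fun i j => ?_
  simp only [mul_apply, map_apply, of_apply, Finset.sum_mul, Finset.mul_sum, mul_assoc]

end PR1Decomposable

theorem pr1Decomposable_const_mul [Fintype m] {r : ℕ} (G : Matrix m (Fin r) R)
    (L : Matrix (Fin r) p (MvPolynomial σ R)) (hL : ∀ k j, (L k j).IsHomogeneous 1) :
    PR1Decomposable (G.map (C : R →+* MvPolynomial σ R) * L) r :=
  ⟨fun _ => true, fun k i => C (G i k), L, fun _ _ => isHomogeneous_C _ _,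
    fun k j => hL k j, Matrix.ext fun i j => by simp [mul_apply, Matrix.sum_apply]⟩

theorem pr1Decomposable_mul_const {r : ℕ} (L : Matrix m (Fin r) (MvPolynomial σ R))
    (G : Matrix (Fin r) p R) (hL : ∀ i k, (L i k).IsHomogeneous 1) :
    PR1Decomposable (L * G.map (C : R →+* MvPolynomial σ R)) r :=
  ⟨fun _ => false, fun k i => L i k, fun k j => C (G k j), fun k i => hL i k,
    fun _ _ => isHomogeneous_C _ _, Matrix.ext fun i j => by simp [mul_apply, Matrix.sum_apply]⟩

theorem PR1Decomposable.of_toBlocks₂₂ [Fintype m] [Fintype p] [DecidableEq m] [DecidableEq p]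
    {k r : ℕ} {N : Matrix (Fin k ⊕ m) (Fin k ⊕ p) (MvPolynomial σ R)}
    (hN : ∀ i j, (N i j).IsHomogeneous 1) (h : PR1Decomposable N.toBlocks₂₂ r) :
    PR1Decomposable N (r + k + k) := by
  let Cσ : R →+* MvPolynomial σ R := C
  have hsplit : N =
      (fromRows (0 : Matrix (Fin k) m R) 1).map Cσ * N.toBlocks₂₂ *
        (fromCols (0 : Matrix p (Fin k) R) 1).map Cσ +
      (fromRows (1 : Matrix (Fin k) (Fin k) R) 0).map Cσ * fromCols N.toBlocks₁₁ N.toBlocks₁₂ +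
      fromRows 0 N.toBlocks₂₁ * (fromCols (1 : Matrix (Fin k) (Fin k) R) 0).map Cσ := by
    refine Matrix.ext ?_
    rintro (i | i) (j | j) <;> simp [Cσ, mul_apply, fromRows_apply_inl, fromRows_apply_inr,
      fromCols_apply_inl, fromCols_apply_inr, one_apply, toBlocks₁₁, toBlocks₁₂, toBlocks₂₁,
      toBlocks₂₂]
  rw [hsplit]
  refine ((h.const_mul_mul_const _ _).add (pr1Decomposable_const_mul _ _ ?_)).add
    (pr1Decomposable_mul_const _ _ ?_)
  · rintro i (j | j) <;> exact hN _ _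
  · rintro (i | i) j
    exacts [isHomogeneous_zero _ _ _, hN _ _]

theorem isHomogeneous_const_mul_mul_const [Fintype m] [Fintype p]
    {M : Matrix m p (MvPolynomial σ R)} {d : ℕ} (hM : ∀ i j, (M i j).IsHomogeneous d)
    (S : Matrix m' m R) (T : Matrix p p' R) (i : m') (j : p') :
    IsHomogeneous
      ((S.map (C : R →+* MvPolynomial σ R) * M * T.map (C : R →+* MvPolynomial σ R)) i j) d := by
  simp only [mul_apply, map_apply, Finset.sum_mul]
  refine IsHomogeneous.sum _ _ _ fun j' _ => IsHomogeneous.sum _ _ _ fun i' _ => ?_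
  simpa [mul_comm, mul_left_comm] using ((hM i' j').C_mul (S i i')).C_mul (T j' j)

theorem map_eval_const_mul_mul_const [Fintype m] [Fintype p] (S : Matrix m' m R)
    (M : Matrix m p (MvPolynomial σ R)) (T : Matrix p p' R) (x : σ → R) :
    (S.map (C : R →+* MvPolynomial σ R) * M * T.map (C : R →+* MvPolynomial σ R)).map (eval x) =
      S * M.map (eval x) * T := by
  simp only [Matrix.map_mul, Matrix.map_map]
  congr <;> ext <;> simp

end PR1

section RankAverage

variable {K σ : Type*} [Field K] [Fintype K] [Fintype σ] [DecidableEq σ]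

noncomputable def evalRankSum {m p : Type*} [Fintype p] (M : Matrix m p (MvPolynomial σ K)) :
    ℕ :=
  ∑ x : σ → K, (M.map (eval x)).rank

theorem card_mul_evalRankSum_toBlocks₂₂_add_le {l m : Type*} [Fintype l] [Fintype m]
    [DecidableEq l] [DecidableEq m] {N : Matrix (l ⊕ m) (l ⊕ m) (MvPolynomial σ K)}
    (hN : ∀ i j, (N i j).IsHomogeneous 1) {x₀ : σ → K}
    (hx₀ : N.map (eval x₀) = fromBlocks 1 0 0 0) :
    Fintype.card K * evalRankSum N.toBlocks₂₂ +
        (Fintype.card K - 1) * Fintype.card (σ → K) * Fintype.card l ≤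
      Fintype.card K * evalRankSum N := by
  have hline : ∀ (x : σ → K) (t : K),
      N.map (eval x) + t • fromBlocks 1 0 0 0 = N.map (eval (x + t • x₀)) := fun x t => by
    rw [← hx₀]
    ext i j
    simp [(hN i j).eval_add_smul]
  have hshift : ∑ x : σ → K, ∑ t : K, (N.map (eval (x + t • x₀))).rank =
      Fintype.card K * evalRankSum N := by
    rw [Finset.sum_comm]
    simp only [fun t : K => Fintype.sum_equiv (Equiv.addRight (t • x₀))
      (fun x => (N.map (eval (x + t • x₀))).rank) (fun x => (N.map (eval x)).rank) fun _ => rfl]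
    simp [evalRankSum]
  have hpoint : ∀ x : σ → K,
      Fintype.card K * (Fintype.card l + (N.toBlocks₂₂.map (eval x)).rank) ≤
        ∑ t : K, (N.map (eval (x + t • x₀))).rank + Fintype.card l := fun x => by
    simp only [← hline]
    exact card_mul_le_sum_rank_add_smul (N.map (eval x))
  have hsum := Finset.sum_le_sum fun x (_ : x ∈ Finset.univ) => hpoint x
  rw [Finset.sum_add_distrib, hshift, ← Finset.mul_sum, Finset.sum_add_distrib] at hsum
  simp only [Finset.sum_const, Finset.card_univ, smul_eq_mul] at hsum
  obtain ⟨q, hq⟩ := Nat.exists_eq_add_one.mpr (Fintype.card_pos (α := K))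
  rw [hq] at hsum ⊢
  simp only [evalRankSum, Nat.add_sub_cancel] at hsum ⊢
  nlinarith

theorem exists_normal_form_at {ι : Type*} [Fintype ι] [DecidableEq ι]
    (M : Matrix ι ι (MvPolynomial σ K)) (hM : ∀ i j, (M i j).IsHomogeneous 1) (x₀ : σ → K) :
    ∃ (k : ℕ) (N : Matrix (Fin (M.map (eval x₀)).rank ⊕ Fin k)
      (Fin (M.map (eval x₀)).rank ⊕ Fin k) (MvPolynomial σ K)),
      (∀ i j, (N i j).IsHomogeneous 1) ∧ N.map (eval x₀) = fromBlocks 1 0 0 0 ∧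
        evalRankSum N = evalRankSum M ∧ ∀ r, PR1Decomposable N r → PR1Decomposable M r := by
  obtain ⟨V, U, e, hV, hU, hVU⟩ := exists_rank_normal_form (M.map (eval x₀))
  let Cσ : K →+* MvPolynomial σ K := C
  have hVdet := (isUnit_iff_isUnit_det V).mp hV
  have hUdet := (isUnit_iff_isUnit_det U).mp hU
  refine ⟨_, reindex e e (V.map Cσ * M * U.map Cσ),
    fun i j => isHomogeneous_const_mul_mul_const hM _ _ _ _, ?_, ?_, ?_⟩
  · rw [reindex_apply, ← submatrix_map, map_eval_const_mul_mul_const, hVU]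
    simp
  · refine Finset.sum_congr rfl fun x _ => ?_
    rw [reindex_apply, ← submatrix_map, map_eval_const_mul_mul_const, ← reindex_apply,
      rank_reindex, rank_mul_eq_left_of_isUnit_det _ _ hUdet,
      rank_mul_eq_right_of_isUnit_det _ _ hVdet]
  · intro r hr
    have hM' : M = V⁻¹.map Cσ * (reindex e e (V.map Cσ * M * U.map Cσ)).submatrix e e *
        U⁻¹.map Cσ := by
      simp only [reindex_apply, submatrix_submatrix, Equiv.symm_comp_self, submatrix_id_id,
        ← Matrix.mul_assoc]
      rw [← Matrix.map_mul, nonsing_inv_mul _ hVdet, Matrix.mul_assoc, ← Matrix.map_mul,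
        mul_nonsing_inv _ hUdet]
      simp
    rw [hM']
    exact (hr.submatrix _ _).const_mul_mul_const _ _

theorem exists_pr1Decomposable_mul_le_of_square {ι : Type} [Fintype ι] [DecidableEq ι]
    (M : Matrix ι ι (MvPolynomial σ K)) (hM : ∀ i j, (M i j).IsHomogeneous 1) :
    ∃ r, PR1Decomposable M r ∧
      (Fintype.card K - 1) * Fintype.card (σ → K) * r ≤ 2 * Fintype.card K * evalRankSum M := by
  induction hs : evalRankSum M using Nat.strong_induction_on generalizing ι with
  | _ s ih =>
  by_cases hzero : ∀ x, M.map (eval x) = 0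
  · have hM0 : M = 0 := Matrix.ext fun i j =>
      (hM i j).eq_zero_of_forall_eval_eq_zero_of_degree_one fun x => congrFun (congrFun (hzero x) i) j
    exact ⟨0, hM0 ▸ .zero, by simp⟩
  push Not at hzero
  obtain ⟨x₀, hx₀⟩ := hzero
  obtain ⟨k, N, hN, hNx₀, hNM, hdecomp⟩ := exists_normal_form_at M hM x₀
  have havg := card_mul_evalRankSum_toBlocks₂₂_add_le hN hNx₀
  rw [Fintype.card_fin, hNM, hs] at havg
  have hpos : 0 < (Fintype.card K - 1) * Fintype.card (σ → K) * (M.map (eval x₀)).rank :=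
    Nat.mul_pos (Nat.mul_pos (Nat.sub_pos_of_lt Fintype.one_lt_card) Fintype.card_pos)
      (rank_pos_of_ne_zero hx₀)
  have hlt : evalRankSum N.toBlocks₂₂ < s :=
    Nat.lt_of_mul_lt_mul_left (a := Fintype.card K) (by omega)
  obtain ⟨r, hr, hrle⟩ := ih _ hlt N.toBlocks₂₂ (fun i j => hN _ _) rfl
  refine ⟨_, hdecomp _ (hr.of_toBlocks₂₂ hN), ?_⟩
  nlinarith

/-- Padding by zeros reduces to square matrices, to which `exists_rank_normal_form` applies. -/
theorem exists_pr1Decomposable_mul_le {m p : Type} [Fintype m] [Fintype p] [DecidableEq m]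
    [DecidableEq p] (M : Matrix m p (MvPolynomial σ K)) (hM : ∀ i j, (M i j).IsHomogeneous 1) :
    ∃ r, PR1Decomposable M r ∧
      (Fintype.card K - 1) * Fintype.card (σ → K) * r ≤ 2 * Fintype.card K * evalRankSum M := by
  let Cσ : K →+* MvPolynomial σ K := C
  let ιₘ : Matrix (m ⊕ p) m K := fromRows 1 0
  let ιₚ : Matrix p (m ⊕ p) K := fromCols 0 1
  let πₘ : Matrix m (m ⊕ p) K := fromCols 1 0
  let πₚ : Matrix (m ⊕ p) p K := fromRows 0 1
  obtain ⟨r, hr, hle⟩ := exists_pr1Decomposable_mul_le_of_square (ιₘ.map Cσ * M * ιₚ.map Cσ)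
    (isHomogeneous_const_mul_mul_const hM _ _)
  refine ⟨r, ?_, hle.trans (Nat.mul_le_mul_left _ (Finset.sum_le_sum fun x _ => ?_))⟩
  · have hM' : M = πₘ.map Cσ * (ιₘ.map Cσ * M * ιₚ.map Cσ) * πₚ.map Cσ := by
      simp only [← Matrix.mul_assoc]
      rw [← Matrix.map_mul, Matrix.mul_assoc, ← Matrix.map_mul]
      simp [ιₘ, ιₚ, πₘ, πₚ, fromCols_mul_fromRows]
    rw [hM']
    exact hr.const_mul_mul_const _ _
  · rw [map_eval_const_mul_mul_const]
    exact (rank_mul_le_left _ _).trans (rank_mul_le_right _ _)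

end RankAverage

theorem statement_18_general (F : Type*) [Field F] [Fintype F] (n a b : ℕ)
    (M : Matrix (Fin a) (Fin b) (MvPolynomial (Fin n) F))
    (hM : ∀ i j, (M i j).IsHomogeneous 1) :
    (PR1 M : ℝ) ≤ 2 * (Fintype.card F : ℝ) / ((Fintype.card F : ℝ) - 1) *
      ((∑ x : Fin n → F, ((M.map (MvPolynomial.eval x)).rank : ℝ)) /
        (Fintype.card (Fin n → F) : ℝ)) := by
  obtain ⟨r, hr, hle⟩ := exists_pr1Decomposable_mul_le M hM
  have hPR : PR1 M ≤ r := Nat.sInf_le hr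
  have hq : (1 : ℝ) < Fintype.card F := by exact_mod_cast Fintype.one_lt_card
  have hpts : (0 : ℝ) < Fintype.card (Fin n → F) := by exact_mod_cast Fintype.card_pos
  have hle' := (Nat.cast_le (α := ℝ)).mpr hle
  push_cast [Nat.cast_sub Fintype.one_lt_card.le, evalRankSum] at hle'
  calc (PR1 M : ℝ) ≤ r := by exact_mod_cast hPR
    _ ≤ _ := by
      rw [div_mul_div_comm, le_div_iff₀ (by nlinarith)]
      linarith

/-- For a matrix `M` of linear forms over `F_q`,
`PR(M) ≤ (2q/(q−1)) · E_x[rank M(x)]`. -/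
theorem statement_18 (F : Type*) [Field F] [Fintype F] (n a b : ℕ) (hn : 1 ≤ n)
    (M : Matrix (Fin a) (Fin b) (MvPolynomial (Fin n) F))
    (hM : ∀ i j, (M i j).IsHomogeneous 1) :
    (PR1 M : ℝ) ≤ 2 * (Fintype.card F : ℝ) / ((Fintype.card F : ℝ) - 1) *
      ((∑ x : Fin n → F, ((M.map (MvPolynomial.eval x)).rank : ℝ)) /
        (Fintype.card (Fin n → F) : ℝ)) :=
  statement_18_general F n a b M hM
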